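/- For the weight module M(g,h;ℤᵏ) with basis {v_β} and action L_α v_β = (g+β+hα)v_{α+β}, W_α v_β = 0, C v_β = 0: if g ∉ ℤᵏ or h ∉ {0,1}, then M(g,h;ℤᵏ) is a simple W[ℤᵏ]-module. -/

import Mathlib

/-- The action of `L_α` on the weight module `M(g,h;ℤᵏ)` (basis `v_β = single β 1`):
`L_α · v_β = (g + β + hα) v_{α+β}`; the elements `W_α` and `C` act as zero. -/
noncomputable def Lact (k : ℕ) (ε : (Fin k → ℤ) →+ ℂ) (g h : ℂ) (α : Fin k → ℤ) :
    ((Fin k → ℤ) →₀ ℂ) →ₗ[ℂ] ((Fin k → ℤ) →₀ ℂ) :=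
  Finsupp.lsum ℂ fun β =>
    LinearMap.toSpanSingleton ℂ _ ((g + ε β + h * ε α) • Finsupp.single (α + β) (1 : ℂ))

/-!
The operator `L₀` acts diagonally with pairwise distinct eigenvalues `g + β`, so every nonzero
invariant subspace contains a basis vector `v_β`. From `v_β`, the operator `L_{γ-β}` reaches `v_γ`
unless `g + β + h(γ - β) = 0`. That degenerate case forces `h ∉ {0, 1}` (otherwise `g = -β` or
`g = -γ`), and then the detour through `δ = 2γ - β` has both coefficients nonzero.
-/

open Finsupp

theorem Submodule.eq_top_of_forall_single_one_mem {ι R : Type*} [Semiring R]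
    {N : Submodule R (ι →₀ R)} (hN : ∀ i, single i 1 ∈ N) : N = ⊤ := by
  rw [eq_top_iff, ← (Finsupp.basisSingleOne (R := R) (ι := ι)).span_eq, Submodule.span_le]
  rintro _ ⟨i, rfl⟩
  simpa using hN i

theorem Submodule.exists_single_one_mem_of_diagonal {G K : Type*} [Field K]
    {N : Submodule K (G →₀ K)} (D : (G →₀ K) →ₗ[K] (G →₀ K)) {μ : G → K}
    (hμ : Function.Injective μ) (hD : ∀ v γ, D v γ = μ γ * v γ) (hN : ∀ v ∈ N, D v ∈ N)
    (hbot : N ≠ ⊥) : ∃ β, single β 1 ∈ N := by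
  suffices ∀ n, ∀ v ∈ N, v ≠ 0 → v.support.card = n → ∃ β, single β 1 ∈ N by
    obtain ⟨v, hvN, hv⟩ := (Submodule.ne_bot_iff N).mp hbot
    exact this _ v hvN hv rfl
  classical
  intro n
  induction n using Nat.strong_induction_on with
  | _ n ih =>
    rintro v hvN hv rfl
    obtain ⟨β, hβ⟩ := Finsupp.support_nonempty_iff.mpr hv
    set w := D v - μ β • v with hw
    have hw_support : w.support = v.support.erase β := by
      ext γ
      simp [hw, hD, ← sub_mul, sub_eq_zero, hμ.eq_iff]
    by_cases hsingle : v.support.erase β = ∅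
    · refine ⟨β, ?_⟩
      have hvβ : v = single β (v β) := by
        rw [eq_single_iff]
        refine ⟨fun γ hγ => Finset.mem_singleton.mpr (by_contra fun hγβ => ?_), rfl⟩
        simpa [hsingle] using Finset.mem_erase.mpr ⟨hγβ, hγ⟩
      rw [hvβ] at hvN
      have hβ1 := N.smul_mem (v β)⁻¹ hvN
      rwa [smul_single, smul_eq_mul, inv_mul_cancel₀ (mem_support_iff.mp hβ)] at hβ1
    · refine ih _ ?_ w (N.sub_mem (hN v hvN) (N.smul_mem _ hvN)) ?_ rfl
      · rw [hw_support]
        exact Finset.card_erase_lt_of_mem hβ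
      · rw [← Finsupp.support_nonempty_iff, hw_support]
        exact Finset.nonempty_iff_ne_empty.mpr hsingle

section

variable {k : ℕ} (ε : (Fin k → ℤ) →+ ℂ) (g h : ℂ)

theorem Lact_single (α β : Fin k → ℤ) :
    Lact k ε g h α (single β 1) = (g + ε β + h * ε α) • single (α + β) (1 : ℂ) := by
  simp [Lact]

theorem Lact_zero_apply (v : (Fin k → ℤ) →₀ ℂ) (γ : Fin k → ℤ) :
    Lact k ε g h 0 v γ = (g + ε γ) * v γ := by
  induction v using Finsupp.induction_linear with
  | zero => simp
  | add v w hv hw => simp [hv, hw]; ring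
  | single β x =>
    by_cases hβ : β = γ <;> simp [Lact, hβ]; ring

theorem single_mem_of_Lact_coeff_ne_zero {N : Submodule ℂ ((Fin k → ℤ) →₀ ℂ)}
    (hN : ∀ α, ∀ v ∈ N, Lact k ε g h α v ∈ N) {β γ : Fin k → ℤ} (hβ : single β 1 ∈ N)
    (hc : g + ε β + h * ε (γ - β) ≠ 0) : single γ 1 ∈ N := by
  have hL := N.smul_mem (g + ε β + h * ε (γ - β))⁻¹ (hN (γ - β) _ hβ)
  rwa [Lact_single, sub_add_cancel, smul_smul, inv_mul_cancel₀ hc, one_smul] at hL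

theorem ne_zero_and_ne_one_of_Lact_coeff_eq_zero
    (hgh : (¬ ∃ β : Fin k → ℤ, g = ε β) ∨ (h ≠ 0 ∧ h ≠ 1)) {β γ : Fin k → ℤ}
    (hc : g + ε β + h * ε (γ - β) = 0) : h ≠ 0 ∧ h ≠ 1 := by
  rcases hgh with hg | hh
  · rw [map_sub] at hc
    constructor
    · rintro rfl
      exact hg ⟨-β, by rw [map_neg]; linear_combination hc⟩
    · rintro rfl
      exact hg ⟨-γ, by rw [map_neg]; linear_combination hc⟩
  · exact hh

variable {ε g h}

theorem single_mem_of_single_mem (hε : Function.Injective ε)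
    (hgh : (¬ ∃ β : Fin k → ℤ, g = ε β) ∨ (h ≠ 0 ∧ h ≠ 1))
    {N : Submodule ℂ ((Fin k → ℤ) →₀ ℂ)} (hN : ∀ α, ∀ v ∈ N, Lact k ε g h α v ∈ N)
    {β : Fin k → ℤ} (hβ : single β 1 ∈ N) (γ : Fin k → ℤ) : single γ 1 ∈ N := by
  by_cases hc : g + ε β + h * ε (γ - β) = 0
  swap
  · exact single_mem_of_Lact_coeff_ne_zero ε g h hN hβ hc
  obtain ⟨h0, h1⟩ := ne_zero_and_ne_one_of_Lact_coeff_eq_zero ε g h hgh hc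
  obtain rfl | hβγ := eq_or_ne β γ
  · exact hβ
  have hεβγ : ε γ - ε β ≠ 0 := sub_ne_zero.mpr (hε.ne hβγ.symm)
  rw [map_sub] at hc
  have hc₁ : g + ε β + h * ε (γ + (γ - β) - β) = h * (ε γ - ε β) := by
    simp only [map_add, map_sub]
    linear_combination hc
  have hc₂ : g + ε (γ + (γ - β)) + h * ε (γ - (γ + (γ - β))) = 2 * (1 - h) * (ε γ - ε β) := by
    simp only [map_add, map_sub]
    linear_combination hc
  have hδ := single_mem_of_Lact_coeff_ne_zero ε g h hN hβ
    (hc₁ ▸ mul_ne_zero h0 hεβγ)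
  exact single_mem_of_Lact_coeff_ne_zero ε g h hN hδ
    (hc₂ ▸ mul_ne_zero (mul_ne_zero two_ne_zero (sub_ne_zero.mpr h1.symm)) hεβγ)

end

theorem stmt12_general (k : ℕ) (ε : (Fin k → ℤ) →+ ℂ)
    (hε : Function.Injective ε) (g h : ℂ)
    (hgh : (¬ ∃ β : Fin k → ℤ, g = ε β) ∨ (h ≠ 0 ∧ h ≠ 1)) :
    ∀ N : Submodule ℂ ((Fin k → ℤ) →₀ ℂ),
      (∀ (α : Fin k → ℤ), ∀ v ∈ N, Lact k ε g h α v ∈ N) → N = ⊥ ∨ N = ⊤ := by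
  intro N hN
  refine or_iff_not_imp_left.mpr fun hbot => ?_
  obtain ⟨β, hβ⟩ := Submodule.exists_single_one_mem_of_diagonal (Lact k ε g h 0)
    (μ := fun γ => g + ε γ) ((add_right_injective g).comp hε) (Lact_zero_apply ε g h)
    (hN 0) hbot
  exact Submodule.eq_top_of_forall_single_one_mem (single_mem_of_single_mem hε hgh hN hβ)

/-- if `g ∉ ℤᵏ` (as a subgroup of `ℂ` via the injective embedding `ε`)
or `h ∉ {0,1}`, then `M(g,h;ℤᵏ)` is a simple module over the high rank `W`-algebra
`W(2,2)`: every subspace invariant under all `L_α` (and trivially under `W_α` and `C`,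
which act as zero) is `⊥` or `⊤`. -/
theorem stmt12 (k : ℕ) (hk : 0 < k) (ε : (Fin k → ℤ) →+ ℂ)
    (hε : Function.Injective ε) (g h : ℂ)
    (hgh : (¬ ∃ β : Fin k → ℤ, g = ε β) ∨ (h ≠ 0 ∧ h ≠ 1)) :
    ∀ N : Submodule ℂ ((Fin k → ℤ) →₀ ℂ),
      (∀ (α : Fin k → ℤ), ∀ v ∈ N, Lact k ε g h α v ∈ N) → N = ⊥ ∨ N = ⊤ :=
  stmt12_general k ε hε g h hgh
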